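/- For all integers n ≥ 1 one has r̃_n < 0, ũ_n > 0, w̃_n > 0, and ṽ_n > 0. -/
import Mathlib


noncomputable section

open Filter


def bt0 (x : ℚ) : ℚ := 41218*x^7 + 35648*x^6 - 932*x^5 - 13190*x^4 - 5128*x^3
  + 811*x^2 + 957*x + 174

def bt1 (x : ℚ) : ℚ := 3874492*x^12 - 14084302*x^11 + 12425954*x^10 + 8641603*x^9
  - 15230839*x^8 - 1369195*x^7 + 8618417*x^6 - 623249*x^5 - 2785973*x^4
  + 308165*x^3 + 495325*x^2 - 40670*x - 37632

def bt2 (x : ℚ) : ℚ := 2*(48802112*x^13 - 201803328*x^12 + 267014032*x^11 - 69927236*x^10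
  - 95912858*x^9 + 37524471*x^8 + 30257812*x^7 - 9523224*x^6 - 8524312*x^5
  + 2138687*x^4 + 1507490*x^3 - 398634*x^2 - 111012*x + 33408)

/-- The auxiliary difference equation (9), imposed for all integers `n ≥ 2`. -/
def Rec3 (y : ℕ → ℚ) : Prop := ∀ n : ℕ, 2 ≤ n →
  (n : ℚ)^3*((n : ℚ) + 1)^3 * bt0 ((n : ℚ) - 1) * y (n+1) - 2*(n : ℚ)*bt1 (n : ℚ) * y n
    - bt2 (n : ℚ) * y (n-1)
    + 2*(n : ℚ)*((n : ℚ) - 1)^4*(2*(n : ℚ) - 3) * bt0 (n : ℚ) * y (n-2) = 0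

/-- The very-well-poised hypergeometric series `r̃_n`
(the summation index `k ≥ 1` is written as `k + 1` with `k : ℕ`). -/
def rt (n : ℕ) : ℝ := -(Nat.factorial n : ℝ)^4 * ∑' k : ℕ,
  (((k : ℝ) + 1) + (n : ℝ)/2)
    * (∏ j ∈ Finset.range (n+1), (((k : ℝ) + 1) - (j : ℝ)))
    * (∏ j ∈ Finset.range (n+1), (((k : ℝ) + 1) + (n : ℝ) + (j : ℝ)))
    / (∏ j ∈ Finset.range (n+1), (((k : ℝ) + 1) + (j : ℝ))^6)

/-! ### Auxiliary results for the series part -/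

/-- A single term of the series defining `rt`. -/
def trm (n k : ℕ) : ℝ :=
  (((k : ℝ) + 1) + (n : ℝ)/2)
    * (∏ j ∈ Finset.range (n+1), (((k : ℝ) + 1) - (j : ℝ)))
    * (∏ j ∈ Finset.range (n+1), (((k : ℝ) + 1) + (n : ℝ) + (j : ℝ)))
    / (∏ j ∈ Finset.range (n+1), (((k : ℝ) + 1) + (j : ℝ))^6)

lemma rt_eq (n : ℕ) : rt n = -(Nat.factorial n : ℝ)^4 * ∑' k : ℕ, trm n k := rfl

lemma trm_denom_pos (n k : ℕ) :
    0 < ∏ j ∈ Finset.range (n+1), (((k : ℝ) + 1) + (j : ℝ))^6 := by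
  apply Finset.prod_pos; intro j _; positivity

lemma trm_p2_pos (n k : ℕ) :
    0 < ∏ j ∈ Finset.range (n+1), (((k : ℝ) + 1) + (n : ℝ) + (j : ℝ)) := by
  apply Finset.prod_pos; intro j _; positivity

lemma trm_p1_pos (n k : ℕ) (hk : n ≤ k) :
    0 < ∏ j ∈ Finset.range (n+1), (((k : ℝ) + 1) - (j : ℝ)) := by
  apply Finset.prod_pos; intro j hj
  have hj' : j ≤ n := Nat.lt_succ_iff.mp (Finset.mem_range.mp hj)
  have : (j : ℝ) ≤ (k : ℝ) := by exact_mod_cast le_trans hj' hk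
  linarith

lemma trm_nonneg (n k : ℕ) : 0 ≤ trm n k := by
  rcases lt_or_ge k n with hk | hk
  · have hz : (∏ j ∈ Finset.range (n+1), (((k : ℝ) + 1) - (j : ℝ))) = 0 := by
      apply Finset.prod_eq_zero (i := k+1) (Finset.mem_range.mpr (by omega))
      push_cast; ring
    unfold trm; rw [hz]; simp
  · have h1 : (0:ℝ) < ((k : ℝ) + 1) + (n : ℝ)/2 := by positivity
    exact le_of_lt (div_pos (mul_pos (mul_pos h1 (trm_p1_pos n k hk)) (trm_p2_pos n k))
      (trm_denom_pos n k))

lemma trm_pos_at_n (n : ℕ) : 0 < trm n n := by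
  have h1 : (0:ℝ) < ((n : ℝ) + 1) + (n : ℝ)/2 := by positivity
  exact div_pos (mul_pos (mul_pos h1 (trm_p1_pos n n le_rfl)) (trm_p2_pos n n))
    (trm_denom_pos n n)

lemma trm_le (n k : ℕ) :
    trm n k ≤ ((n:ℝ)/2+1) * ((n:ℝ)+1)^(n+1) * (2*(n:ℝ)+1)^(n+1) / ((k:ℝ)+1)^2 := by
  set a : ℝ := (k : ℝ) + 1 with ha_def
  have ha : (1:ℝ) ≤ a := by
    rw [ha_def]; have := Nat.cast_nonneg (α := ℝ) k; linarith
  have ha0 : (0:ℝ) < a := by linarith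
  have hn0 : (0:ℝ) ≤ (n:ℝ) := Nat.cast_nonneg n
  set C : ℝ := ((n:ℝ)/2+1) * ((n:ℝ)+1)^(n+1) * (2*(n:ℝ)+1)^(n+1) with hC_def
  have hC0 : 0 ≤ C := by positivity
  -- denominator lower bound
  have hD : a^(6*(n+1)) ≤ ∏ j ∈ Finset.range (n+1), (a + (j : ℝ))^6 := by
    calc a^(6*(n+1)) = ∏ _j ∈ Finset.range (n+1), a^6 := by
          rw [Finset.prod_const, Finset.card_range, ← pow_mul]
      _ ≤ ∏ j ∈ Finset.range (n+1), (a + (j : ℝ))^6 := by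
          apply Finset.prod_le_prod
          · intro j _; positivity
          · intro j _
            apply pow_le_pow_left₀ (le_of_lt ha0)
            have : (0:ℝ) ≤ (j:ℝ) := Nat.cast_nonneg j
            linarith
  -- numerator upper bounds
  have hhead : a + (n:ℝ)/2 ≤ a * ((n:ℝ)/2+1) := by nlinarith
  have hP1 : (∏ j ∈ Finset.range (n+1), (a - (j : ℝ)))
      ≤ (a * ((n:ℝ)+1))^(n+1) := by
    calc (∏ j ∈ Finset.range (n+1), (a - (j : ℝ)))
        ≤ |∏ j ∈ Finset.range (n+1), (a - (j : ℝ))| := le_abs_self _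
      _ = ∏ j ∈ Finset.range (n+1), |a - (j : ℝ)| := Finset.abs_prod _ _
      _ ≤ ∏ _j ∈ Finset.range (n+1), (a * ((n:ℝ)+1)) := by
          apply Finset.prod_le_prod
          · intro j _; exact abs_nonneg _
          · intro j hj
            have hj' : (j:ℝ) ≤ (n:ℝ) := by
              exact_mod_cast Nat.lt_succ_iff.mp (Finset.mem_range.mp hj)
            have hmul : (n:ℝ)+1 ≤ a * ((n:ℝ)+1) := le_mul_of_one_le_left (by positivity) ha
            rw [abs_le]
            constructor <;> nlinarith
      _ = (a * ((n:ℝ)+1))^(n+1) := by rw [Finset.prod_const, Finset.card_range]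
  have hP2 : (∏ j ∈ Finset.range (n+1), (a + (n:ℝ) + (j : ℝ)))
      ≤ (a * (2*(n:ℝ)+1))^(n+1) := by
    calc (∏ j ∈ Finset.range (n+1), (a + (n:ℝ) + (j : ℝ)))
        ≤ ∏ _j ∈ Finset.range (n+1), (a * (2*(n:ℝ)+1)) := by
          apply Finset.prod_le_prod
          · intro j _
            have : (0:ℝ) ≤ (j:ℝ) := Nat.cast_nonneg j
            positivity
          · intro j hj
            have hj' : (j:ℝ) ≤ (n:ℝ) := by
              exact_mod_cast Nat.lt_succ_iff.mp (Finset.mem_range.mp hj)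
            nlinarith
      _ = (a * (2*(n:ℝ)+1))^(n+1) := by rw [Finset.prod_const, Finset.card_range]
  have hP1nn : 0 ≤ ∏ j ∈ Finset.range (n+1), (a - (j : ℝ)) := by
    have := trm_nonneg n k
    rcases lt_or_ge k n with hk | hk
    · -- the product is zero in this case
      have hz : (∏ j ∈ Finset.range (n+1), (a - (j : ℝ))) = 0 := by
        apply Finset.prod_eq_zero (i := k+1) (Finset.mem_range.mpr (by omega))
        rw [ha_def]; push_cast; ring
      rw [hz]
    · exact le_of_lt (trm_p1_pos n k hk)
  have hnum : (a + (n:ℝ)/2) * (∏ j ∈ Finset.range (n+1), (a - (j : ℝ)))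
      * (∏ j ∈ Finset.range (n+1), (a + (n:ℝ) + (j : ℝ)))
      ≤ C * a^(2*n+3) := by
    have hh0 : 0 ≤ a + (n:ℝ)/2 := by positivity
    have hB1 : 0 ≤ (a * ((n:ℝ)+1))^(n+1) := by positivity
    have hstep1 : (a + (n:ℝ)/2) * (∏ j ∈ Finset.range (n+1), (a - (j : ℝ)))
        ≤ (a * ((n:ℝ)/2+1)) * (a * ((n:ℝ)+1))^(n+1) :=
      mul_le_mul hhead hP1 hP1nn (by positivity)
    have hstep2 : (a + (n:ℝ)/2) * (∏ j ∈ Finset.range (n+1), (a - (j : ℝ)))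
        * (∏ j ∈ Finset.range (n+1), (a + (n:ℝ) + (j : ℝ)))
        ≤ ((a * ((n:ℝ)/2+1)) * (a * ((n:ℝ)+1))^(n+1)) * (a * (2*(n:ℝ)+1))^(n+1) := by
      apply mul_le_mul hstep1 hP2 (le_of_lt (trm_p2_pos n k)) (by positivity)
    calc (a + (n:ℝ)/2) * (∏ j ∈ Finset.range (n+1), (a - (j : ℝ)))
        * (∏ j ∈ Finset.range (n+1), (a + (n:ℝ) + (j : ℝ)))
        ≤ ((a * ((n:ℝ)/2+1)) * (a * ((n:ℝ)+1))^(n+1)) * (a * (2*(n:ℝ)+1))^(n+1) := hstep2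
      _ = C * a^(2*n+3) := by rw [hC_def, mul_pow, mul_pow]; ring
  -- combine
  have key : trm n k ≤ C * a^(2*n+3) / a^(6*(n+1)) := by
    unfold trm
    rw [← ha_def]
    apply div_le_div₀ (by positivity) hnum (by positivity) hD
  have hsplit : a^(6*(n+1)) = a^(2*n+3) * a^(4*n+3) := by
    rw [← pow_add]; congr 1; omega
  have hfin : C * a^(2*n+3) / a^(6*(n+1)) ≤ C / a^2 := by
    rw [hsplit]
    rw [show C * a^(2*n+3) / (a^(2*n+3) * a^(4*n+3))
        = (a^(2*n+3) * C) / (a^(2*n+3) * a^(4*n+3)) by ring_nf]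
    rw [mul_div_mul_left _ _ (by positivity : (a:ℝ)^(2*n+3) ≠ 0)]
    apply div_le_div_of_nonneg_left hC0 (by positivity)
    exact pow_le_pow_right₀ ha (by omega)
  exact le_trans key hfin

lemma trm_summable (n : ℕ) : Summable (trm n) := by
  have h2 : Summable (fun k : ℕ => 1/((k:ℝ)+1)^2) := by
    have h0 : Summable (fun m : ℕ => 1/(m:ℝ)^2) :=
      Real.summable_one_div_nat_pow.mpr (by norm_num)
    have h1 := (summable_nat_add_iff 1).mpr h0
    simpa using h1
  have hbase : Summable (fun k : ℕ =>
      ((n:ℝ)/2+1) * ((n:ℝ)+1)^(n+1) * (2*(n:ℝ)+1)^(n+1) / ((k:ℝ)+1)^2) := by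
    have := h2.mul_left (((n:ℝ)/2+1) * ((n:ℝ)+1)^(n+1) * (2*(n:ℝ)+1)^(n+1))
    simpa [div_eq_mul_inv, mul_assoc] using this
  exact Summable.of_nonneg_of_le (trm_nonneg n) (trm_le n) hbase

lemma rt_neg (n : ℕ) : rt n < 0 := by
  have hpos : 0 < ∑' k : ℕ, trm n k :=
    Summable.tsum_pos (trm_summable n) (trm_nonneg n) n (trm_pos_at_n n)
  have hfac : (0:ℝ) < (Nat.factorial n : ℝ)^4 := by positivity
  rw [rt_eq]
  nlinarith [mul_pos hfac hpos]

/-! ### Auxiliary results for the recurrence part -/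

lemma bt0_pos1 (m : ℕ) : 0 < bt0 ((m:ℚ)+1) := by
  have h : bt0 ((m:ℚ)+1) = 59558 + 432189*(m:ℚ) + 1297265*(m:ℚ)^2 + 2088382*(m:ℚ)^3
      + 1959500*(m:ℚ)^4 + 1078534*(m:ℚ)^5 + 324174*(m:ℚ)^6 + 41218*(m:ℚ)^7 := by
    unfold bt0; ring
  rw [h]; positivity

lemma bt0_pos2 (m : ℕ) : 0 < bt0 ((m:ℚ)+2) := by
  have h : bt0 ((m:ℚ)+2) = 7280820 + 24756105*(m:ℚ) + 35832939*(m:ℚ)^2 + 28637832*(m:ℚ)^3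
      + 13657410*(m:ℚ)^4 + 3889156*(m:ℚ)^5 + 612700*(m:ℚ)^6 + 41218*(m:ℚ)^7 := by
    unfold bt0; ring
  rw [h]; positivity

lemma bt2_nonneg2 (m : ℕ) : 0 ≤ bt2 ((m:ℚ)+2) := by
  have h : bt2 ((m:ℚ)+2) = 23947661088 + 234573261144*(m:ℚ) + 1026849900564*(m:ℚ)^2
      + 2665119720756*(m:ℚ)^3 + 4589869100382*(m:ℚ)^4 + 5555924854192*(m:ℚ)^5
      + 4876376028832*(m:ℚ)^6 + 3149325487304*(m:ℚ)^7 + 1499533071270*(m:ℚ)^8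
      + 520741866924*(m:ℚ)^9 + 128375070264*(m:ℚ)^10 + 21299986208*(m:ℚ)^11
      + 2134103168*(m:ℚ)^12 + 97604224*(m:ℚ)^13 := by
    unfold bt2; ring
  rw [h]; positivity

lemma keyL (m : ℕ) :
    185^3*201*(((m:ℚ)+2)^3*((m:ℚ)+3)^3*bt0 ((m:ℚ)+1))
      + 201*(2*((m:ℚ)+2)*((m:ℚ)+1)^4*(2*((m:ℚ)+2)-3)*bt0 ((m:ℚ)+2))
    ≤ 185^2*201*(2*((m:ℚ)+2)*bt1 ((m:ℚ)+2)) + 185^2*bt2 ((m:ℚ)+2) := by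
  have h : 185^2*201*(2*((m:ℚ)+2)*bt1 ((m:ℚ)+2)) + 185^2*bt2 ((m:ℚ)+2)
      - (185^3*201*(((m:ℚ)+2)^3*((m:ℚ)+3)^3*bt0 ((m:ℚ)+1))
      + 201*(2*((m:ℚ)+2)*((m:ℚ)+1)^4*(2*((m:ℚ)+2)-3)*bt0 ((m:ℚ)+2)))
      = 709452806325120 + 5472500848176660*(m:ℚ) + 17675618687740854*(m:ℚ)^2
      + 30982946778901428*(m:ℚ)^3 + 31904270506939131*(m:ℚ)^4
      + 19548431818224442*(m:ℚ)^5 + 7776871990310608*(m:ℚ)^6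
      + 4402581788266790*(m:ℚ)^7 + 4654940648491587*(m:ℚ)^8
      + 3566161144463280*(m:ℚ)^9 + 1632347297054448*(m:ℚ)^10
      + 441578613604802*(m:ℚ)^11 + 65835323657732*(m:ℚ)^12
      + 4191115115278*(m:ℚ)^13 := by
    unfold bt0 bt1 bt2; ring
  have hp : (0:ℚ) ≤ 709452806325120 + 5472500848176660*(m:ℚ) + 17675618687740854*(m:ℚ)^2
      + 30982946778901428*(m:ℚ)^3 + 31904270506939131*(m:ℚ)^4
      + 19548431818224442*(m:ℚ)^5 + 7776871990310608*(m:ℚ)^6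
      + 4402581788266790*(m:ℚ)^7 + 4654940648491587*(m:ℚ)^8
      + 3566161144463280*(m:ℚ)^9 + 1632347297054448*(m:ℚ)^10
      + 441578613604802*(m:ℚ)^11 + 65835323657732*(m:ℚ)^12
      + 4191115115278*(m:ℚ)^13 := by positivity
  linarith

lemma keyU (m : ℕ) :
    185*201^2*(2*((m:ℚ)+2)*bt1 ((m:ℚ)+2)) + 201^2*bt2 ((m:ℚ)+2)
    ≤ 185*201^3*(((m:ℚ)+2)^3*((m:ℚ)+3)^3*bt0 ((m:ℚ)+1))
      + 185*(2*((m:ℚ)+2)*((m:ℚ)+1)^4*(2*((m:ℚ)+2)-3)*bt0 ((m:ℚ)+2)) := by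
  have h : 185*201^3*(((m:ℚ)+2)^3*((m:ℚ)+3)^3*bt0 ((m:ℚ)+1))
      + 185*(2*((m:ℚ)+2)*((m:ℚ)+1)^4*(2*((m:ℚ)+2)-3)*bt0 ((m:ℚ)+2))
      - (185*201^2*(2*((m:ℚ)+2)*bt1 ((m:ℚ)+2)) + 201^2*bt2 ((m:ℚ)+2))
      = 690602258178432 + 8309659465889196*(m:ℚ) + 42886386295159146*(m:ℚ)^2
      + 126496365417818124*(m:ℚ)^3 + 239043925622451333*(m:ℚ)^4
      + 306877389191850278*(m:ℚ)^5 + 276028220908410288*(m:ℚ)^6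
      + 176132891314126426*(m:ℚ)^7 + 79446115976378685*(m:ℚ)^8
      + 24784782147420336*(m:ℚ)^9 + 5091341167146096*(m:ℚ)^10
      + 620621837623102*(m:ℚ)^11 + 34311430061052*(m:ℚ)^12
      + 61644692786*(m:ℚ)^13 := by
    unfold bt0 bt1 bt2; ring
  have hp : (0:ℚ) ≤ 690602258178432 + 8309659465889196*(m:ℚ) + 42886386295159146*(m:ℚ)^2
      + 126496365417818124*(m:ℚ)^3 + 239043925622451333*(m:ℚ)^4
      + 306877389191850278*(m:ℚ)^5 + 276028220908410288*(m:ℚ)^6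
      + 176132891314126426*(m:ℚ)^7 + 79446115976378685*(m:ℚ)^8
      + 24784782147420336*(m:ℚ)^9 + 5091341167146096*(m:ℚ)^10
      + 620621837623102*(m:ℚ)^11 + 34311430061052*(m:ℚ)^12
      + 61644692786*(m:ℚ)^13 := by positivity
  linarith

/-- The ratio invariant. -/
def RInv (y : ℕ → ℚ) (n : ℕ) : Prop :=
  0 < y n ∧ 185*y n ≤ y (n+1) ∧ y (n+1) ≤ 201*y n
    ∧ 185*y (n+1) ≤ y (n+2) ∧ y (n+2) ≤ 201*y (n+1)

set_option maxHeartbeats 2000000 in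
lemma inv_step (y : ℕ → ℚ) (hy : Rec3 y) (n : ℕ) (h : RInv y n) : RInv y (n+1) := by
  obtain ⟨h0, h1, h2, h3, h4⟩ := h
  have hw1 : 0 < y (n+1) := lt_of_lt_of_le (by linarith) h1
  have hw2 : 0 < y (n+2) := lt_of_lt_of_le (by linarith) h3
  have e := hy (n+2) (by omega)
  have ei1 : n+2-1 = n+1 := by omega
  have ei2 : n+2-2 = n := by omega
  rw [ei1, ei2] at e
  push_cast at e
  rw [show ((n:ℚ)+2)-1 = (n:ℚ)+1 from by ring, show ((n:ℚ)+2)+1 = (n:ℚ)+3 from by ring] at e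
  rw [show n+2+1 = n+3 from by omega] at e
  have hP0 := bt0_pos1 n
  have hQ0 := bt0_pos2 n
  have hP2 := bt2_nonneg2 n
  have hn0 : (0:ℚ) ≤ (n:ℚ) := Nat.cast_nonneg n
  have h23 : (0:ℚ) ≤ 2*((n:ℚ)+2)-3 := by linarith
  have hcp : 0 ≤ 2*((n:ℚ)+2)*((n:ℚ)+1)^4*(2*((n:ℚ)+2)-3)*bt0 ((n:ℚ)+2) :=
    mul_nonneg (mul_nonneg (by positivity) h23) (le_of_lt hQ0)
  have hapos : 0 < ((n:ℚ)+2)^3*((n:ℚ)+3)^3*bt0 ((n:ℚ)+1) :=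
    mul_pos (by positivity) hP0
  -- lower bound: 185 * y (n+2) ≤ y (n+3)
  have k1 : 0 ≤ bt2 ((n:ℚ)+2) * (201*y (n+1) - y (n+2)) :=
    mul_nonneg hP2 (by linarith)
  have k2 : 0 ≤ (2*((n:ℚ)+2)*((n:ℚ)+1)^4*(2*((n:ℚ)+2)-3)*bt0 ((n:ℚ)+2))
      * (y (n+2) - 185^2 * y n) :=
    mul_nonneg hcp (by linarith)
  have k3 : 0 ≤ y (n+2) * ((185^2*201*(2*((n:ℚ)+2)*bt1 ((n:ℚ)+2)) + 185^2*bt2 ((n:ℚ)+2))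
      - (185^3*201*(((n:ℚ)+2)^3*((n:ℚ)+3)^3*bt0 ((n:ℚ)+1))
        + 201*(2*((n:ℚ)+2)*((n:ℚ)+1)^4*(2*((n:ℚ)+2)-3)*bt0 ((n:ℚ)+2)))) :=
    mul_nonneg (le_of_lt hw2) (by linarith [keyL n])
  have mainL : (((n:ℚ)+2)^3*((n:ℚ)+3)^3*bt0 ((n:ℚ)+1)) * (185 * y (n+2))
      ≤ (((n:ℚ)+2)^3*((n:ℚ)+3)^3*bt0 ((n:ℚ)+1)) * y (n+3) := by linarith [e, k1, k2, k3]
  have hL : 185 * y (n+2) ≤ y (n+3) := le_of_mul_le_mul_left mainL hapos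
  -- upper bound: y (n+3) ≤ 201 * y (n+2)
  have k1' : 0 ≤ bt2 ((n:ℚ)+2) * (y (n+2) - 185*y (n+1)) :=
    mul_nonneg hP2 (by linarith)
  have k2' : 0 ≤ (2*((n:ℚ)+2)*((n:ℚ)+1)^4*(2*((n:ℚ)+2)-3)*bt0 ((n:ℚ)+2))
      * (201^2 * y n - y (n+2)) :=
    mul_nonneg hcp (by linarith)
  have k3' : 0 ≤ y (n+2) * ((185*201^3*(((n:ℚ)+2)^3*((n:ℚ)+3)^3*bt0 ((n:ℚ)+1))
        + 185*(2*((n:ℚ)+2)*((n:ℚ)+1)^4*(2*((n:ℚ)+2)-3)*bt0 ((n:ℚ)+2)))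
      - (185*201^2*(2*((n:ℚ)+2)*bt1 ((n:ℚ)+2)) + 201^2*bt2 ((n:ℚ)+2))) :=
    mul_nonneg (le_of_lt hw2) (by linarith [keyU n])
  have mainU : (((n:ℚ)+2)^3*((n:ℚ)+3)^3*bt0 ((n:ℚ)+1)) * y (n+3)
      ≤ (((n:ℚ)+2)^3*((n:ℚ)+3)^3*bt0 ((n:ℚ)+1)) * (201 * y (n+2)) := by
    linarith [e, k1', k2', k3']
  have hU : y (n+3) ≤ 201 * y (n+2) := le_of_mul_le_mul_left mainU hapos
  refine ⟨hw1, h3, h4, ?_, ?_⟩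
  · rw [show n+1+1 = n+2 from by omega, show n+1+2 = n+3 from by omega]; exact hL
  · rw [show n+1+1 = n+2 from by omega, show n+1+2 = n+3 from by omega]; exact hU

lemma pos_all (y : ℕ → ℚ) (hy : Rec3 y) (h2 : RInv y 2) : ∀ n, 2 ≤ n → 0 < y n := by
  have key : ∀ m, RInv y (2+m) := by
    intro m
    induction m with
    | zero => exact h2
    | succ k ih =>
        have := inv_step y hy (2+k) ih
        rwa [show 2+(k+1) = (2+k)+1 from by omega]
  intro n hn
  obtain ⟨m, rfl⟩ : ∃ m, n = 2+m := ⟨n-2, by omega⟩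
  exact (key m).1

/-- For all integers `n ≥ 1`: `r̃_n < 0`, `ũ_n > 0`, `w̃_n > 0`, `ṽ_n > 0`. -/
theorem stmt14
    (ut wt vt : ℕ → ℚ)
    (hut : Rec3 ut) (hwt : Rec3 wt) (hvt : Rec3 vt)
    (hut0 : ut 0 = 0) (hut1 : ut 1 = 2) (hut2 : ut 2 = 552)
    (hwt0 : wt 0 = 1) (hwt1 : wt 1 = 12) (hwt2 : wt 2 = 1764)
    (hvt0 : vt 0 = 0) (hvt1 : vt 1 = 33/2) (hvt2 : vt 2 = 43085/16) :
    ∀ n : ℕ, 1 ≤ n → rt n < 0 ∧ 0 < ut n ∧ 0 < wt n ∧ 0 < vt n := by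
  -- values at 3 and 4
  have hut3 : ut 3 = 105156 := by
    have e := hut 2 (by norm_num)
    norm_num [bt0, bt1, bt2, hut0, hut1, hut2] at e
    linarith
  have hut4 : ut 4 = 19666080 := by
    have e := hut 3 (by norm_num)
    norm_num [bt0, bt1, bt2, hut1, hut2, hut3] at e
    linarith
  have hwt3 : wt 3 = 106369505/307 := by
    have e := hwt 2 (by norm_num)
    norm_num [bt0, bt1, bt2, hwt0, hwt1, hwt2] at e
    linarith
  have hwt4 : wt 4 = 52014754070425/804033 := by
    have e := hwt 3 (by norm_num)
    norm_num [bt0, bt1, bt2, hwt1, hwt2, hwt3] at e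
    linarith
  have hvt3 : vt 3 = 18919219/36 := by
    have e := hvt 2 (by norm_num)
    norm_num [bt0, bt1, bt2, hvt0, hvt1, hvt2] at e
    linarith
  have hvt4 : vt 4 = 3053078676535/31104 := by
    have e := hvt 3 (by norm_num)
    norm_num [bt0, bt1, bt2, hvt1, hvt2, hvt3] at e
    linarith
  have hutI : RInv ut 2 := by
    refine ⟨by rw [hut2]; norm_num, ?_, ?_, ?_, ?_⟩ <;>
      simp only [show (2:ℕ)+1 = 3 from rfl, show (2:ℕ)+2 = 4 from rfl,
        hut2, hut3, hut4] <;> norm_num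
  have hwtI : RInv wt 2 := by
    refine ⟨by rw [hwt2]; norm_num, ?_, ?_, ?_, ?_⟩ <;>
      simp only [show (2:ℕ)+1 = 3 from rfl, show (2:ℕ)+2 = 4 from rfl,
        hwt2, hwt3, hwt4] <;> norm_num
  have hvtI : RInv vt 2 := by
    refine ⟨by rw [hvt2]; norm_num, ?_, ?_, ?_, ?_⟩ <;>
      simp only [show (2:ℕ)+1 = 3 from rfl, show (2:ℕ)+2 = 4 from rfl,
        hvt2, hvt3, hvt4] <;> norm_num
  intro n hn
  refine ⟨rt_neg n, ?_, ?_, ?_⟩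
  · rcases Nat.lt_or_ge n 2 with h | h
    · have : n = 1 := by omega
      rw [this, hut1]; norm_num
    · exact pos_all ut hut hutI n h
  · rcases Nat.lt_or_ge n 2 with h | h
    · have : n = 1 := by omega
      rw [this, hwt1]; norm_num
    · exact pos_all wt hwt hwtI n h
  · rcases Nat.lt_or_ge n 2 with h | h
    · have : n = 1 := by omega
      rw [this, hvt1]; norm_num
    · exact pos_all vt hvt hvtI n h
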